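/- Every Darboux injection f : [0,1] → ℝ from the closed unit interval is a topological embedding, i.e., a homeomorphism of [0,1] onto its image with the subspace topology. -/

import Mathlib

/-!
By the Darboux property `f` maps every interval onto an order-connected set. An injective map with
this property is strictly monotone or strictly antitone: if `x < y < z` and `f y` lay outside the
interval between `f x` and `f z`, one of `f x`, `f z` would lie between the other two values and
hence be attained also on whichever of `[x, y]`, `[y, z]` does not contain its preimage. A strictly
monotone or antitone map with order-connected range, such as the range of a Darboux map, is an
embedding for the order topologies.
-/

open Set Topology Function

def IsDarboux {X Y : Type*} [TopologicalSpace X] [TopologicalSpace Y] (f : X → Y) : Prop :=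
  ∀ C : Set X, IsPreconnected C → IsPreconnected (f '' C)

section LinearOrder

variable {α β : Type*} [LinearOrder α] [LinearOrder β] {f : α → β}

lemma mem_uIcc_of_injective_of_ordConnected_image_Icc (hf : Injective f)
    (hI : ∀ a b, (f '' Icc a b).OrdConnected) {x y z : α} (hxy : x < y) (hyz : y < z) :
    f y ∈ uIcc (f x) (f z) := by
  by_contra hy
  have hmiddle : f x ∈ uIcc (f y) (f z) ∨ f z ∈ uIcc (f x) (f y) := by
    simp only [mem_uIcc] at hy ⊢
    grind
  rcases hmiddle with hx | hz
  · obtain ⟨v, hv, hvx⟩ := (hI y z).uIcc_subset (mem_image_of_mem f (left_mem_Icc.2 hyz.le))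
      (mem_image_of_mem f (right_mem_Icc.2 hyz.le)) hx
    exact (hxy.trans_le hv.1).ne (hf hvx).symm
  · obtain ⟨v, hv, hvz⟩ := (hI x y).uIcc_subset (mem_image_of_mem f (left_mem_Icc.2 hxy.le))
      (mem_image_of_mem f (right_mem_Icc.2 hxy.le)) hz
    exact (hv.2.trans_lt hyz).ne (hf hvz)

theorem strictMono_or_strictAnti_of_injective_of_ordConnected_image_Icc (hf : Injective f)
    (hI : ∀ a b, (f '' Icc a b).OrdConnected) : StrictMono f ∨ StrictAnti f := by
  suffices Monotone f ∨ Antitone f from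
    this.imp (·.strictMono_of_injective hf) (·.strictAnti_of_injective hf)
  by_contra h
  obtain ⟨x, y, z, hxy, hyz, hdent⟩ := not_monotone_not_antitone_iff_exists_lt_lt.1 (not_or.1 h)
  have hy := mem_uIcc_of_injective_of_ordConnected_image_Icc hf hI hxy hyz
  rw [mem_uIcc] at hy
  rcases hdent with hdent | hdent <;> rcases hy with hy | hy <;> order

theorem StrictAnti.isEmbedding_of_ordConnected [TopologicalSpace α] [OrderTopology α]
    [TopologicalSpace β] [OrderTopology β] (hf : StrictAnti f) (hc : (range f).OrdConnected) :
    IsEmbedding f :=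
  StrictMono.isEmbedding_of_ordConnected (β := βᵒᵈ) hf hc.dual

end LinearOrder

theorem IsDarboux.isEmbedding_of_injective {α β : Type*} [ConditionallyCompleteLinearOrder α]
    [DenselyOrdered α] [TopologicalSpace α] [OrderTopology α] [LinearOrder β] [TopologicalSpace β]
    [OrderTopology β] {f : α → β} (hf : IsDarboux f) (hinj : Injective f) :
    IsEmbedding f := by
  have hrange : (range f).OrdConnected := image_univ ▸ (hf _ isPreconnected_univ).ordConnected
  rcases strictMono_or_strictAnti_of_injective_of_ordConnected_image_Icc hinj
    fun a b => (hf _ isPreconnected_Icc).ordConnected with hmono | hanti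
  · exact hmono.isEmbedding_of_ordConnected hrange
  · exact hanti.isEmbedding_of_ordConnected hrange

/-- Every Darboux injection `f : [0,1] → ℝ` (an injective map sending connected sets
to connected sets) is a topological embedding. -/
theorem darboux_injection_Icc_isEmbedding (f : (Set.Icc (0:ℝ) 1) → ℝ)
    (hinj : Function.Injective f)
    (hdarboux : ∀ C : Set (Set.Icc (0:ℝ) 1), IsPreconnected C → IsPreconnected (f '' C)) :
    Topology.IsEmbedding f :=
  IsDarboux.isEmbedding_of_injective hdarboux hinj
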